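/- With the grouped Macaulay expansion data k_0 > k_1 > ... > k_r ≥ 0, j_0 > j_1 > ... > j_r ≥ 1, i_n ≥ 0, j_n - i_n ≥ 1, and j_{n+1} = j_n - i_n - 1: for each s with 0 ≤ s ≤ r-1, C(j_s - i_s + k_s, j_s - i_s - 1) ≥ Σ_{n=s+1}^{r} C(j_n + k_n + 1, j_n) - Σ_{n=s+1}^{r} C(j_n - i_n + k_n, j_n - i_n - 1). -/

import Mathlib

/-!
Since `j n - i n = j (n+1) + 1` and `k (n+1) < k n`, each term `C(j_{n+1} + k_{n+1} + 1, j_{n+1})`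
of the first sum is at most the preceding term `C(j_n - i_n + k_n, j_n - i_n - 1)` of the second.
The difference of the two sums therefore telescopes to at most
`C(j_s - i_s + k_s, j_s - i_s - 1)` minus the (nonnegative) last term of the second sum.
-/

open Finset

theorem Finset.sum_Ioc_sub_sum_Ioc_le_sub {M : Type*} [AddCommGroup M] [PartialOrder M]
    [IsOrderedAddMonoid M] {a b : ℕ → M} {s r : ℕ} (hsr : s ≤ r)
    (hab : ∀ n ∈ Ico s r, a (n + 1) ≤ b n) :
    ∑ n ∈ Ioc s r, a n - ∑ n ∈ Ioc s r, b n ≤ b s - b r := by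
  induction r, hsr using Nat.le_induction with
  | base => simp
  | succ r hsr ih =>
    rw [sum_Ioc_succ_top hsr, sum_Ioc_succ_top hsr]
    have hlast : a (r + 1) ≤ b r := hab r (mem_Ico.2 ⟨hsr, r.lt_succ_self⟩)
    have hprev := ih fun n hn ↦ hab n (Ico_subset_Ico_right r.le_succ hn)
    calc ∑ n ∈ Ioc s r, a n + a (r + 1) - (∑ n ∈ Ioc s r, b n + b (r + 1))
        = (∑ n ∈ Ioc s r, a n - ∑ n ∈ Ioc s r, b n) + (a (r + 1) - b (r + 1)) := by abel
      _ ≤ (b s - b r) + (b r - b (r + 1)) := add_le_add hprev (sub_le_sub_right hlast _)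
      _ = b s - b (r + 1) := by abel

theorem stmt_10_general (r s : ℕ) (k j i : ℕ → ℕ)
    (hk : ∀ n, n < r → k (n + 1) < k n)
    (hjsucc : ∀ n, n < r → j (n + 1) + i n + 1 = j n)
    (hs : s + 1 ≤ r) :
    (∑ n ∈ Finset.Icc (s + 1) r, (Nat.choose (j n + k n + 1) (j n) : ℤ)) -
        ∑ n ∈ Finset.Icc (s + 1) r,
          (Nat.choose (j n - i n + k n) (j n - i n - 1) : ℤ) ≤
      (Nat.choose (j s - i s + k s) (j s - i s - 1) : ℤ) := by
  have hstep : ∀ n ∈ Ico s r, (Nat.choose (j (n + 1) + k (n + 1) + 1) (j (n + 1)) : ℤ) ≤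
      Nat.choose (j n - i n + k n) (j n - i n - 1) := by
    intro n hn
    have hnr := (mem_Ico.1 hn).2
    have hji : j n - i n = j (n + 1) + 1 := by have := hjsucc n hnr; omega
    rw [hji, Nat.add_sub_cancel]
    exact_mod_cast Nat.choose_le_choose _ (by have := hk n hnr; omega)
  have htelescope := sum_Ioc_sub_sum_Ioc_le_sub
    (a := fun n ↦ (Nat.choose (j n + k n + 1) (j n) : ℤ))
    (b := fun n ↦ (Nat.choose (j n - i n + k n) (j n - i n - 1) : ℤ)) (Nat.le_of_succ_le hs) hstep
  rw [Icc_add_one_left_eq_Ioc]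
  linarith [(Nat.cast_nonneg _ : (0 : ℤ) ≤ Nat.choose (j r - i r + k r) (j r - i r - 1))]

/-- With the grouped Macaulay expansion data `k 0 > ⋯ > k r ≥ 0`,
`j 0 > ⋯ > j r ≥ 1`, `i n ≥ 0`, `j n - i n ≥ 1`, `j (n+1) = j n - i n - 1`:
for each `0 ≤ s ≤ r - 1`,
`C(js - is + ks, js - is - 1) ≥ Σ_{n=s+1}^{r} C(jn + kn + 1, jn) - Σ_{n=s+1}^{r} C(jn - in + kn, jn - in - 1)`. -/
theorem stmt_10 (r s : ℕ) (k j i : ℕ → ℕ)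
    (hk : ∀ n, n < r → k (n + 1) < k n)
    (hji : ∀ n, n ≤ r → i n + 1 ≤ j n)
    (hjr : 1 ≤ j r)
    (hjsucc : ∀ n, n < r → j (n + 1) + i n + 1 = j n)
    (hs : s + 1 ≤ r) :
    (∑ n ∈ Finset.Icc (s + 1) r, (Nat.choose (j n + k n + 1) (j n) : ℤ)) -
        ∑ n ∈ Finset.Icc (s + 1) r,
          (Nat.choose (j n - i n + k n) (j n - i n - 1) : ℤ) ≤
      (Nat.choose (j s - i s + k s) (j s - i s - 1) : ℤ) :=
  stmt_10_general r s k j i hk hjsucc hs
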